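/- Let f : ℝ → ℝ be nonnegative and twice differentiable with |f''(x)| ≤ M for all x. Then |f'(x)| ≤ √(2 M f(x)) for every x. -/

import Mathlib

/-!
Since `f'' ≤ M`, the function `y ↦ M y² / 2 - f y` is convex, so it lies above its tangent
line at `x`; this gives the quadratic upper bound
`0 ≤ f (x + t) ≤ f x + f' x t + M t² / 2` for all `t`. A quadratic in `t` that is nonnegative
everywhere has nonpositive discriminant, i.e. `f' x ^ 2 ≤ 2 M f x`.
-/

open Set

theorem ConvexOn.add_deriv_mul_sub_le {S : Set ℝ} {f : ℝ → ℝ} {x y : ℝ} (hfc : ConvexOn ℝ S f)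
    (hx : x ∈ S) (hy : y ∈ S) (hfx : DifferentiableAt ℝ f x) :
    f x + deriv f x * (y - x) ≤ f y := by
  rcases lt_trichotomy x y with hxy | rfl | hyx
  · have h := hfc.deriv_le_slope hx hy hxy hfx
    rw [slope_def_field, le_div_iff₀ (sub_pos.2 hxy)] at h
    linarith
  · simp
  · have h := hfc.slope_le_deriv hy hx hyx hfx
    rw [slope_def_field, div_le_iff₀ (sub_pos.2 hyx)] at h
    linarith

theorem le_add_deriv_mul_add_sq_of_deriv2_le {f : ℝ → ℝ} {M : ℝ} (hf : Differentiable ℝ f)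
    (hf' : Differentiable ℝ (deriv f)) (hM : ∀ y, deriv (deriv f) y ≤ M) (x y : ℝ) :
    f y ≤ f x + deriv f x * (y - x) + M / 2 * (y - x) ^ 2 := by
  set ψ : ℝ → ℝ := fun y => M / 2 * y ^ 2 - f y
  have hψ : ∀ y, HasDerivAt ψ (M * y - deriv f y) y := fun y =>
    (((hasDerivAt_pow 2 y).const_mul (M / 2)).sub (hf y).hasDerivAt).congr_deriv (by ring)
  have hderiv : deriv ψ = fun y => M * y - deriv f y := funext fun y => (hψ y).deriv
  have hmono : Monotone (deriv ψ) := by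
    rw [hderiv]
    refine monotone_of_deriv_nonneg (by fun_prop) fun y => ?_
    rw [deriv_fun_sub (by fun_prop) (hf' y), deriv_const_mul_field', deriv_id'']
    linarith [hM y]
  have hconv : ConvexOn ℝ univ ψ :=
    hmono.convexOn_univ_of_deriv fun y => (hψ y).differentiableAt
  have h := hconv.add_deriv_mul_sub_le (mem_univ x) (mem_univ y) (hψ x).differentiableAt
  rw [hderiv] at h
  simp only [ψ] at h
  linear_combination h

theorem sq_le_of_forall_nonneg_quadratic {a b c : ℝ} (h : ∀ t : ℝ, 0 ≤ a + b * t + c / 2 * t ^ 2) :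
    b ^ 2 ≤ 2 * c * a := by
  have := discrim_le_zero (a := c / 2) (b := b) (c := a) fun t => by linarith [h t, sq t]
  rw [discrim] at this
  linarith

theorem abs_deriv_le_sqrt_of_nonneg_of_deriv2_le {f : ℝ → ℝ} {M : ℝ} (hf0 : ∀ x, 0 ≤ f x)
    (hf : Differentiable ℝ f) (hf' : Differentiable ℝ (deriv f))
    (hM : ∀ x, deriv (deriv f) x ≤ M) (x : ℝ) :
    |deriv f x| ≤ Real.sqrt (2 * M * f x) := by
  have hquad : ∀ t, 0 ≤ f x + deriv f x * t + M / 2 * t ^ 2 := fun t => by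
    have := le_add_deriv_mul_add_sq_of_deriv2_le hf hf' hM x (x + t)
    rw [add_sub_cancel_left] at this
    linarith [hf0 (x + t)]
  rw [← Real.sqrt_sq_eq_abs]
  exact Real.sqrt_le_sqrt (sq_le_of_forall_nonneg_quadratic hquad)

theorem stmt_11 (f : ℝ → ℝ) (M : ℝ) (hf0 : ∀ x, 0 ≤ f x)
    (hf1 : ∀ x, DifferentiableAt ℝ f x) (hf2 : ∀ x, DifferentiableAt ℝ (deriv f) x)
    (hM : ∀ x, |deriv (deriv f) x| ≤ M) :
    ∀ x, |deriv f x| ≤ Real.sqrt (2 * M * f x) :=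
  abs_deriv_le_sqrt_of_nonneg_of_deriv2_le hf0 hf1 hf2 fun x => (le_abs_self _).trans (hM x)
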